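/- arXiv:2207.06320 — 2 statements merged into one kernel-verified Lean document; each statement's English description precedes it below -/
import Mathlib

section
/- For any minimizer β̂_n of D_{n,2}, ∫ (F^Y_n(y) − n^{-1} Σ_{i=1}^n F^ε(y − β̂_n^T X_i))² dF^Y_n(y) = O_P(n^{-1}); moreover the same O_P(n^{-1}) bound holds with F^Y in place of F^Y_n inside the square, and in particular D_{n,2}(β_0) = O_P(n^{-1}). -/
open MeasureTheory ProbabilityTheory Filter Matrix
open scoped ENNReal NNReal Topology

noncomputable section

/-- The Euclidean norm of a vector in `Fin d → ℝ`. -/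
def vnorm {d : ℕ} (v : Fin d → ℝ) : ℝ := Real.sqrt (∑ i, v i ^ 2)

/-- The norm `‖x‖_{2,Γ} = √(xᵀ Γ x)` associated with a matrix `Γ`. -/
def mnorm {d : ℕ} (Γ : Matrix (Fin d) (Fin d) ℝ) (x : Fin d → ℝ) : ℝ :=
  Real.sqrt (x ⬝ᵥ Γ *ᵥ x)

/-- The cumulative distribution function of a measure on `ℝ`. -/
def cdfOf (μ : Measure ℝ) (y : ℝ) : ℝ := (μ (Set.Iic y)).toReal

/-- The empirical CDF of the sample `Y 0 ω, …, Y (n-1) ω`. -/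
def empCDF {Ω : Type*} (n : ℕ) (Y : ℕ → Ω → ℝ) (ω : Ω) (y : ℝ) : ℝ :=
  (n : ℝ)⁻¹ * ∑ i ∈ Finset.range n, if Y i ω ≤ y then (1 : ℝ) else 0

/-- The empirical deconvolution criterion `D_{n,p}(β)`. -/
def Dnp {Ω : Type*} {d : ℕ} (Feps : ℝ → ℝ) (p n : ℕ) (Y : ℕ → Ω → ℝ)
    (X : ℕ → Ω → Fin d → ℝ) (ω : Ω) (β : Fin d → ℝ) : ℝ :=
  (n : ℝ)⁻¹ * ∑ j ∈ Finset.range n,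
    |empCDF n Y ω (Y j ω) - (n : ℝ)⁻¹ * ∑ i ∈ Finset.range n, Feps (Y j ω - β ⬝ᵥ X i ω)| ^ p

/-- The population criterion `D_{2,F^Y}(β)`. -/
def Dpop {d : ℕ} (Feps : ℝ → ℝ) (μX : Measure (Fin d → ℝ)) (μY : Measure ℝ)
    (β : Fin d → ℝ) : ℝ :=
  ∫ y, (cdfOf μY y - ∫ x, Feps (y - β ⬝ᵥ x) ∂μX) ^ 2 ∂μY

/-- `Z 0, Z 1, …` is an i.i.d. sample from the distribution `μ`. -/
def IsIIDSample {Ω : Type*} [MeasureSpace Ω] {E : Type*} [MeasurableSpace E]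
    (Z : ℕ → Ω → E) (μ : Measure E) : Prop :=
  (∀ i, Measurable (Z i)) ∧ (∀ i, Measure.map (Z i) ℙ = μ) ∧
    iIndepFun Z ℙ

/-- The unlinked linear regression model: `Y =d β₀ᵀ X + ε`. -/
def UnlinkedModel {d : ℕ} (μX : Measure (Fin d → ℝ)) (μeps : Measure ℝ)
    (β₀ : Fin d → ℝ) (μY : Measure ℝ) : Prop :=
  μY = Measure.map (fun q : (Fin d → ℝ) × ℝ => β₀ ⬝ᵥ q.1 + q.2) (μX.prod μeps)

/-- The set `B₀` of vectors `β` such that `βᵀX` has the same distribution as `β₀ᵀX`. -/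
def B0set {d : ℕ} (μX : Measure (Fin d → ℝ)) (β₀ : Fin d → ℝ) : Set (Fin d → ℝ) :=
  {β | Measure.map (fun x => β ⬝ᵥ x) μX = Measure.map (fun x => β₀ ⬝ᵥ x) μX}

/-!
Write `u i j = 1{Y i ≤ Y j} - F^Y(Y j)` and `v i j = F^Y(Y j) - F^ε(Y j - β₀ᵀ X i)`. Then
`F^Y_n(Y j) - F^Y(Y j)` and `F^Y(Y j) - n⁻¹ ∑ᵢ F^ε(Y j - β₀ᵀ X i)` are the averages over `i` of
`u i j` and `v i j`. Both are degenerate kernels: integrating out the first variable gives zero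
(for `v` this is the model `F^Y = F^{β₀ᵀX} ⋆ F^ε`). Hence for fixed `j` the terms with indices
`i ≠ k` both different from `j` are uncorrelated, only `O(n)` of the `n²` cross terms survive, and
each squared average has expectation `O(1/n)`. Summing over `j`, the two random sums
`S = ∑ⱼ (F^Y_n - F^Y)²(Y j)` and `V = ∑ⱼ (F^Y - n⁻¹ ∑ᵢ F^ε(· - β₀ᵀ X i))²(Y j)` have bounded
expectation, so they are `O_P(1)` by Markov's inequality. Finally `n D_{n,2}(β₀) ≤ 2 (S + V)`,
minimality of `β̂ₙ` transfers this bound to `β̂ₙ`, and one more triangle inequality in `ℓ²`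
replaces `F^Y_n` by `F^Y`.
-/

open Finset

section CDF

lemma cdfOf_mono (μ : Measure ℝ) [IsFiniteMeasure μ] : Monotone (cdfOf μ) := fun _ _ hab =>
  ENNReal.toReal_mono (measure_ne_top _ _) (measure_mono (Set.Iic_subset_Iic.2 hab))

lemma measurable_cdfOf (μ : Measure ℝ) [IsFiniteMeasure μ] : Measurable (cdfOf μ) :=
  (cdfOf_mono μ).measurable

lemma cdfOf_nonneg (μ : Measure ℝ) (y : ℝ) : 0 ≤ cdfOf μ y := ENNReal.toReal_nonneg

lemma cdfOf_le_one (μ : Measure ℝ) [IsProbabilityMeasure μ] (y : ℝ) : cdfOf μ y ≤ 1 :=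
  measureReal_le_one

lemma integral_ite_le_eq_cdfOf (μ : Measure ℝ) [IsProbabilityMeasure μ] (c : ℝ) :
    ∫ a, (if a ≤ c then (1 : ℝ) else 0) ∂μ = cdfOf μ c := by
  have h : (fun a : ℝ => if a ≤ c then (1 : ℝ) else 0) = (Set.Iic c).indicator fun _ => 1 := by
    ext a
    simp [Set.indicator_apply]
  rw [h, integral_indicator_const _ measurableSet_Iic, smul_eq_mul, mul_one]
  rfl

lemma UnlinkedModel.integral_cdfOf_sub_dotProduct {d : ℕ} {μX : Measure (Fin d → ℝ)}
    {μeps μY : Measure ℝ} [IsProbabilityMeasure μX] [IsProbabilityMeasure μeps]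
    {β₀ : Fin d → ℝ} (hmodel : UnlinkedModel μX μeps β₀ μY) (c : ℝ) :
    ∫ x, cdfOf μeps (c - β₀ ⬝ᵥ x) ∂μX = cdfOf μY c := by
  have hsum : Measurable fun q : (Fin d → ℝ) × ℝ => β₀ ⬝ᵥ q.1 + q.2 := by fun_prop
  have hfiber : Measurable fun x : Fin d → ℝ => μeps (Set.Iic (c - β₀ ⬝ᵥ x)) :=
    (Monotone.measurable fun _ _ hab => measure_mono (Set.Iic_subset_Iic.2 hab)).comp
      (by fun_prop)
  have hprod : μY (Set.Iic c) = ∫⁻ x, μeps (Set.Iic (c - β₀ ⬝ᵥ x)) ∂μX := by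
    rw [hmodel, Measure.map_apply hsum measurableSet_Iic,
      Measure.prod_apply (hsum measurableSet_Iic)]
    congr with x
    congr with e
    simp only [Set.mem_preimage, Set.mem_Iic]
    constructor <;> intro h <;> linarith
  rw [cdfOf, hprod, ← integral_toReal hfiber.aemeasurable (ae_of_all _ fun _ => measure_lt_top _ _)]
  rfl

end CDF

section DegenerateKernel

variable {Ω E F : Type*} [MeasurableSpace Ω] [MeasurableSpace E] [MeasurableSpace F]
  {P : Measure Ω}

lemma ProbabilityTheory.IndepFun.map_prodMk_eq_prod [IsFiniteMeasure P] {f : Ω → E} {g : Ω → F}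
    {μ : Measure E} {ν : Measure F} (hfg : IndepFun f g P) (hf : Measurable f)
    (hg : Measurable g) (hfμ : P.map f = μ) (hgν : P.map g = ν) :
    P.map (fun ω => (f ω, g ω)) = μ.prod ν := by
  rw [hfg.map_prod_eq_prod_map_map hf.aemeasurable hg.aemeasurable, hfμ, hgν]

lemma integral_mul_eq_zero_of_integral_fst_eq_zero {μ : Measure E} {ν : Measure F}
    [IsProbabilityMeasure μ] [IsProbabilityMeasure ν] {g : E → F → ℝ}
    (hg : Measurable (Function.uncurry g)) {C : ℝ} (hgC : ∀ x c, |g x c| ≤ C)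
    (hg0 : ∀ c, ∫ x, g x c ∂μ = 0) :
    ∫ p : (E × E) × F, g p.1.1 p.2 * g p.1.2 p.2 ∂(μ.prod μ).prod ν = 0 := by
  have hint : Integrable (fun p : (E × E) × F => g p.1.1 p.2 * g p.1.2 p.2) ((μ.prod μ).prod ν) :=
    .of_bound (by fun_prop) (C * C) <| ae_of_all _ fun p => by
      rw [Real.norm_eq_abs, abs_mul]
      exact mul_le_mul (hgC _ _) (hgC _ _) (abs_nonneg _) ((abs_nonneg _).trans (hgC p.1.1 p.2))
  have hfiber : ∀ c, ∫ x : E × E, g x.1 c * g x.2 c ∂μ.prod μ = 0 := fun c => by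
    rw [integral_prod_mul (fun x => g x c) (fun x => g x c), hg0, zero_mul]
  rw [integral_prod_symm _ hint]
  simp only [hfiber, integral_zero]

lemma integral_mul_eq_zero_of_map_eq_prod {μ : Measure E} {ν : Measure F}
    [IsProbabilityMeasure μ] [IsProbabilityMeasure ν] {g : E → F → ℝ}
    (hg : Measurable (Function.uncurry g)) {C : ℝ} (hgC : ∀ x c, |g x c| ≤ C)
    (hg0 : ∀ c, ∫ x, g x c ∂μ = 0) {A A' : Ω → E} {B : Ω → F} (hA : Measurable A)
    (hA' : Measurable A') (hB : Measurable B)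
    (hlaw : P.map (fun ω => ((A ω, A' ω), B ω)) = (μ.prod μ).prod ν) :
    ∫ ω, g (A ω) (B ω) * g (A' ω) (B ω) ∂P = 0 := by
  have hmeas : Measurable fun ω => ((A ω, A' ω), B ω) := (hA.prodMk hA').prodMk hB
  have hprod : Measurable fun p : (E × E) × F => g p.1.1 p.2 * g p.1.2 p.2 := by fun_prop
  rw [← integral_mul_eq_zero_of_integral_fst_eq_zero (ν := ν) hg hgC hg0, ← hlaw,
    integral_map hmeas.aemeasurable hprod.aestronglyMeasurable]

end DegenerateKernel

section SecondMoment

lemma card_filter_eq_or_eq_or_eq_le {ι : Type*} [DecidableEq ι] (s : Finset ι) (j : ι) :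
    #{p ∈ s ×ˢ s | p.1 = p.2 ∨ p.1 = j ∨ p.2 = j} ≤ 3 * #s := by
  have hsub : {p ∈ s ×ˢ s | p.1 = p.2 ∨ p.1 = j ∨ p.2 = j} ⊆
      s.diag ∪ ({j} ×ˢ s ∪ s ×ˢ {j}) := by
    intro p hp
    simp only [mem_filter, mem_product] at hp
    simp only [mem_union, mem_diag, mem_product, mem_singleton]
    grind
  calc _ ≤ #(s.diag ∪ ({j} ×ˢ s ∪ s ×ˢ {j})) := card_le_card hsub
    _ ≤ #s.diag + (#({j} ×ˢ s) + #(s ×ˢ {j})) :=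
      (card_union_le _ _).trans (Nat.add_le_add_left (card_union_le _ _) _)
    _ = 3 * #s := by simp only [diag_card, card_product, card_singleton]; ring

variable {Ω ι : Type*} [MeasurableSpace Ω] {P : Measure Ω} [IsProbabilityMeasure P]
  [DecidableEq ι]

lemma integral_sq_sum_le_three_mul_card (s : Finset ι) (j : ι) {w : ι → Ω → ℝ}
    (hw : ∀ i, Measurable (w i)) (hw1 : ∀ i ω, |w i ω| ≤ 1)
    (horth : ∀ i k, i ≠ k → i ≠ j → k ≠ j → ∫ ω, w i ω * w k ω ∂P = 0) :
    ∫ ω, (∑ i ∈ s, w i ω) ^ 2 ∂P ≤ 3 * #s := by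
  have hprod1 : ∀ i k ω, ‖w i ω * w k ω‖ ≤ 1 := fun i k ω => by
    rw [Real.norm_eq_abs, abs_mul]
    exact mul_le_one₀ (hw1 i ω) (abs_nonneg _) (hw1 k ω)
  have hint : ∀ p : ι × ι, Integrable (fun ω => w p.1 ω * w p.2 ω) P := fun p =>
    .of_bound ((hw p.1).mul (hw p.2)).aestronglyMeasurable 1 (ae_of_all _ (hprod1 p.1 p.2))
  have hterm : ∀ p : ι × ι, ∫ ω, w p.1 ω * w p.2 ω ∂P ≤
      if p.1 = p.2 ∨ p.1 = j ∨ p.2 = j then 1 else 0 := by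
    rintro ⟨i, k⟩
    split_ifs with hbad
    · simpa using (le_abs_self _).trans
        (norm_integral_le_of_norm_le_const (μ := P) (ae_of_all _ (hprod1 i k)))
    · push Not at hbad
      exact (horth i k hbad.1 hbad.2.1 hbad.2.2).le
  calc ∫ ω, (∑ i ∈ s, w i ω) ^ 2 ∂P
      = ∑ p ∈ s ×ˢ s, ∫ ω, w p.1 ω * w p.2 ω ∂P := by
        simp only [sq, sum_mul_sum, ← sum_product']
        exact integral_finsetSum _ fun p _ => hint p
    _ ≤ ∑ p ∈ s ×ˢ s, if p.1 = p.2 ∨ p.1 = j ∨ p.2 = j then (1 : ℝ) else 0 :=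
        sum_le_sum fun p _ => hterm p
    _ ≤ 3 * #s := by
        rw [sum_boole]
        exact_mod_cast card_filter_eq_or_eq_or_eq_le s j

end SecondMoment

lemma sq_inv_mul_sum_le_one (n : ℕ) {a : ℕ → ℝ} (ha : ∀ i, |a i| ≤ 1) :
    ((n : ℝ)⁻¹ * ∑ i ∈ range n, a i) ^ 2 ≤ 1 := by
  rw [sq_le_one_iff_abs_le_one, abs_mul, abs_inv, Nat.abs_cast]
  calc (n : ℝ)⁻¹ * |∑ i ∈ range n, a i| ≤ (n : ℝ)⁻¹ * n := by
        gcongr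
        exact (abs_sum_le_sum_abs _ _).trans ((sum_le_sum fun i _ => ha i).trans_eq (by simp))
    _ ≤ 1 := by rw [mul_comm]; exact mul_inv_le_one

section KernelAverage

variable {Ω E F : Type*} [MeasurableSpace Ω] [MeasurableSpace E] [MeasurableSpace F]
  {P : Measure Ω} [IsProbabilityMeasure P] {g : E → F → ℝ} {A : ℕ → Ω → E} {B : ℕ → Ω → F}

lemma integrable_sq_kernel_avg (hg : Measurable (Function.uncurry g))
    (hg1 : ∀ x c, |g x c| ≤ 1) (hA : ∀ i, Measurable (A i)) (hB : ∀ j, Measurable (B j))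
    (n j : ℕ) :
    Integrable (fun ω => ((n : ℝ)⁻¹ * ∑ i ∈ range n, g (A i ω) (B j ω)) ^ 2) P := by
  have hmeas : Measurable fun ω => ((n : ℝ)⁻¹ * ∑ i ∈ range n, g (A i ω) (B j ω)) ^ 2 :=
    (measurable_const.mul (Finset.measurable_sum _ fun i _ =>
      hg.comp ((hA i).prodMk (hB j)))).pow_const 2
  refine .of_bound hmeas.aestronglyMeasurable 1 (ae_of_all _ fun ω => ?_)
  rw [Real.norm_of_nonneg (sq_nonneg _)]
  exact sq_inv_mul_sum_le_one n fun i => hg1 _ _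

lemma integrable_sum_sq_kernel_avg (hg : Measurable (Function.uncurry g))
    (hg1 : ∀ x c, |g x c| ≤ 1) (hA : ∀ i, Measurable (A i)) (hB : ∀ j, Measurable (B j))
    (n : ℕ) :
    Integrable (fun ω => ∑ j ∈ range n, ((n : ℝ)⁻¹ * ∑ i ∈ range n, g (A i ω) (B j ω)) ^ 2) P :=
  integrable_finsetSum _ fun j _ => integrable_sq_kernel_avg hg hg1 hA hB n j

lemma integral_sum_sq_kernel_avg_le_three {μ : Measure E} {ν : Measure F}
    [IsProbabilityMeasure μ] [IsProbabilityMeasure ν] (hg : Measurable (Function.uncurry g))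
    (hg1 : ∀ x c, |g x c| ≤ 1) (hg0 : ∀ c, ∫ x, g x c ∂μ = 0) (hA : ∀ i, Measurable (A i))
    (hB : ∀ j, Measurable (B j))
    (hlaw : ∀ i k j, i ≠ k → i ≠ j → k ≠ j →
      P.map (fun ω => ((A i ω, A k ω), B j ω)) = (μ.prod μ).prod ν) (n : ℕ) :
    ∫ ω, ∑ j ∈ range n, ((n : ℝ)⁻¹ * ∑ i ∈ range n, g (A i ω) (B j ω)) ^ 2 ∂P ≤ 3 := by
  have hterm : ∀ j, ∫ ω, ((n : ℝ)⁻¹ * ∑ i ∈ range n, g (A i ω) (B j ω)) ^ 2 ∂P ≤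
      (n : ℝ)⁻¹ ^ 2 * (3 * n) := fun j => by
    simp only [mul_pow, integral_const_mul]
    gcongr
    refine (integral_sq_sum_le_three_mul_card _ j (fun i => by fun_prop) (fun i ω => hg1 _ _)
      fun i k hik hij hkj => integral_mul_eq_zero_of_map_eq_prod hg hg1 hg0 (hA i) (hA k) (hB j)
        (hlaw i k j hik hij hkj)).trans_eq ?_
    rw [card_range]
  calc _ = ∑ j ∈ range n, ∫ ω, ((n : ℝ)⁻¹ * ∑ i ∈ range n, g (A i ω) (B j ω)) ^ 2 ∂P :=
        integral_finsetSum _ fun j _ => integrable_sq_kernel_avg hg hg1 hA hB n j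
    _ ≤ ∑ _j ∈ range n, (n : ℝ)⁻¹ ^ 2 * (3 * n) := sum_le_sum fun j _ => hterm j
    _ = 3 * ((n : ℝ) * (n : ℝ)⁻¹) ^ 2 := by rw [sum_const, card_range, nsmul_eq_mul]; ring
    _ ≤ 3 := by
        have h : ((n : ℝ) * (n : ℝ)⁻¹) ^ 2 ≤ 1 :=
          pow_le_one₀ (by positivity) mul_inv_le_one
        linarith

end KernelAverage

section Sample

variable {Ω : Type*} [MeasureSpace Ω] [IsProbabilityMeasure (ℙ : Measure Ω)]

lemma IsIIDSample.isProbabilityMeasure {E : Type*} [MeasurableSpace E] {Z : ℕ → Ω → E}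
    {μ : Measure E} (hZ : IsIIDSample Z μ) : IsProbabilityMeasure μ :=
  hZ.2.1 0 ▸ Measure.isProbabilityMeasure_map (hZ.1 0).aemeasurable

lemma IsIIDSample.map_triple_eq_prod {E : Type*} [MeasurableSpace E] {Z : ℕ → Ω → E}
    {μ : Measure E} (hZ : IsIIDSample Z μ) {i k j : ℕ} (hik : i ≠ k) (hij : i ≠ j)
    (hkj : k ≠ j) : Measure.map (fun ω => ((Z i ω, Z k ω), Z j ω)) ℙ = (μ.prod μ).prod μ := by
  obtain ⟨hm, hlaw, hindep⟩ := hZ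
  exact (hindep.indepFun_prodMk hm i k j hij hkj).map_prodMk_eq_prod ((hm i).prodMk (hm k)) (hm j)
    ((hindep.indepFun hik).map_prodMk_eq_prod (hm i) (hm k) (hlaw i) (hlaw k)) (hlaw j)

lemma map_pair_sample_prodMk_eq_prod {E F : Type*} [MeasurableSpace E] [MeasurableSpace F]
    {X : ℕ → Ω → E} {Y : ℕ → Ω → F} {μX : Measure E} {μY : Measure F}
    (hX : IsIIDSample X μX) (hY : IsIIDSample Y μY)
    (hindep : IndepFun (fun ω => fun i => Y i ω) (fun ω => fun i => X i ω) ℙ)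
    {i k : ℕ} (hik : i ≠ k) (j : ℕ) :
    Measure.map (fun ω => ((X i ω, X k ω), Y j ω)) ℙ = (μX.prod μX).prod μY := by
  have hXY : IndepFun (fun ω => (X i ω, X k ω)) (Y j) ℙ :=
    (hindep.comp (measurable_pi_apply j)
      ((measurable_pi_apply i).prodMk (measurable_pi_apply k))).symm
  exact hXY.map_prodMk_eq_prod ((hX.1 i).prodMk (hX.1 k)) (hY.1 j)
    ((hX.2.2.indepFun hik).map_prodMk_eq_prod (hX.1 i) (hX.1 k) (hX.2.1 i) (hX.2.1 k)) (hY.2.1 j)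

end Sample

section Kernels

def indicatorKernel (μ : Measure ℝ) (a c : ℝ) : ℝ := (if a ≤ c then 1 else 0) - cdfOf μ c

def convolutionKernel {d : ℕ} (μeps μY : Measure ℝ) (β₀ x : Fin d → ℝ) (c : ℝ) : ℝ :=
  cdfOf μY c - cdfOf μeps (c - β₀ ⬝ᵥ x)

variable {d : ℕ} {μX : Measure (Fin d → ℝ)} {μeps μY : Measure ℝ} {β₀ : Fin d → ℝ}

lemma measurable_indicatorKernel (μ : Measure ℝ) [IsFiniteMeasure μ] :
    Measurable (Function.uncurry (indicatorKernel μ)) :=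
  (Measurable.ite (measurableSet_le measurable_fst measurable_snd) measurable_const
    measurable_const).sub ((measurable_cdfOf μ).comp measurable_snd)

lemma abs_indicatorKernel_le_one (μ : Measure ℝ) [IsProbabilityMeasure μ] (a c : ℝ) :
    |indicatorKernel μ a c| ≤ 1 :=
  abs_sub_le_of_nonneg_of_le (by split_ifs <;> norm_num) (by split_ifs <;> norm_num)
    (cdfOf_nonneg μ c) (cdfOf_le_one μ c)

lemma integral_indicatorKernel (μ : Measure ℝ) [IsProbabilityMeasure μ] (c : ℝ) :
    ∫ a, indicatorKernel μ a c ∂μ = 0 := by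
  have hind : Integrable (fun a : ℝ => if a ≤ c then (1 : ℝ) else 0) μ :=
    .of_bound (Measurable.ite measurableSet_Iic measurable_const
      measurable_const).aestronglyMeasurable 1 (ae_of_all _ fun a => by split_ifs <;> norm_num)
  simp only [indicatorKernel]
  rw [integral_sub hind (integrable_const _), integral_ite_le_eq_cdfOf, integral_const,
    probReal_univ, one_smul, sub_self]

lemma measurable_convolutionKernel [IsFiniteMeasure μeps] [IsFiniteMeasure μY] :
    Measurable (Function.uncurry (convolutionKernel (d := d) μeps μY β₀)) :=
  ((measurable_cdfOf μY).comp measurable_snd).sub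
    ((measurable_cdfOf μeps).comp (by fun_prop))

lemma abs_convolutionKernel_le_one [IsProbabilityMeasure μeps] [IsProbabilityMeasure μY]
    (x : Fin d → ℝ) (c : ℝ) : |convolutionKernel μeps μY β₀ x c| ≤ 1 :=
  abs_sub_le_of_nonneg_of_le (cdfOf_nonneg _ _) (cdfOf_le_one _ _) (cdfOf_nonneg _ _)
    (cdfOf_le_one _ _)

lemma UnlinkedModel.integral_convolutionKernel [IsProbabilityMeasure μX]
    [IsProbabilityMeasure μeps] (hmodel : UnlinkedModel μX μeps β₀ μY) (c : ℝ) :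
    ∫ x, convolutionKernel μeps μY β₀ x c ∂μX = 0 := by
  have hcdf : Integrable (fun x : Fin d → ℝ => cdfOf μeps (c - β₀ ⬝ᵥ x)) μX :=
    .of_bound ((measurable_cdfOf μeps).comp (by fun_prop)).aestronglyMeasurable 1
      (ae_of_all _ fun x => by
        rw [Real.norm_of_nonneg (cdfOf_nonneg _ _)]
        exact cdfOf_le_one _ _)
  simp only [convolutionKernel]
  rw [integral_sub (integrable_const _) hcdf, hmodel.integral_cdfOf_sub_dotProduct, integral_const,
    probReal_univ, one_smul, sub_self]

end Kernels

section Deviations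

variable {Ω : Type*} {d : ℕ}

def empCDFError (n : ℕ) (Y : ℕ → Ω → ℝ) (μY : Measure ℝ) (ω : Ω) : ℝ :=
  ∑ j ∈ range n, (empCDF n Y ω (Y j ω) - cdfOf μY (Y j ω)) ^ 2

def plugInError (n : ℕ) (Y : ℕ → Ω → ℝ) (X : ℕ → Ω → Fin d → ℝ) (μeps μY : Measure ℝ)
    (β₀ : Fin d → ℝ) (ω : Ω) : ℝ :=
  ∑ j ∈ range n,
    (cdfOf μY (Y j ω) - (n : ℝ)⁻¹ * ∑ i ∈ range n, cdfOf μeps (Y j ω - β₀ ⬝ᵥ X i ω)) ^ 2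

lemma empCDFError_nonneg (n : ℕ) (Y : ℕ → Ω → ℝ) (μY : Measure ℝ) (ω : Ω) :
    0 ≤ empCDFError n Y μY ω :=
  sum_nonneg fun _ _ => sq_nonneg _

lemma plugInError_nonneg (n : ℕ) (Y : ℕ → Ω → ℝ) (X : ℕ → Ω → Fin d → ℝ) (μeps μY : Measure ℝ)
    (β₀ : Fin d → ℝ) (ω : Ω) : 0 ≤ plugInError n Y X μeps μY β₀ ω :=
  sum_nonneg fun _ _ => sq_nonneg _

lemma empCDFError_eq (n : ℕ) (Y : ℕ → Ω → ℝ) (μY : Measure ℝ) :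
    empCDFError n Y μY = fun ω =>
      ∑ j ∈ range n, ((n : ℝ)⁻¹ * ∑ i ∈ range n, indicatorKernel μY (Y i ω) (Y j ω)) ^ 2 := by
  ext ω
  refine sum_congr rfl fun j hj => ?_
  have hn : (n : ℝ) ≠ 0 := Nat.cast_ne_zero.2 (Nat.ne_zero_of_lt (mem_range.1 hj))
  simp only [empCDF, indicatorKernel, sum_sub_distrib, sum_const, card_range, nsmul_eq_mul,
    mul_sub, inv_mul_cancel_left₀ hn]

lemma plugInError_eq (n : ℕ) (Y : ℕ → Ω → ℝ) (X : ℕ → Ω → Fin d → ℝ) (μeps μY : Measure ℝ)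
    (β₀ : Fin d → ℝ) :
    plugInError n Y X μeps μY β₀ = fun ω => ∑ j ∈ range n,
      ((n : ℝ)⁻¹ * ∑ i ∈ range n, convolutionKernel μeps μY β₀ (X i ω) (Y j ω)) ^ 2 := by
  ext ω
  refine sum_congr rfl fun j hj => ?_
  have hn : (n : ℝ) ≠ 0 := Nat.cast_ne_zero.2 (Nat.ne_zero_of_lt (mem_range.1 hj))
  simp only [convolutionKernel, sum_sub_distrib, sum_const, card_range, nsmul_eq_mul,
    mul_sub, inv_mul_cancel_left₀ hn]

lemma sum_sq_sub_le {ι : Type*} (s : Finset ι) (a b c : ι → ℝ) :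
    ∑ i ∈ s, (a i - c i) ^ 2 ≤ 2 * ∑ i ∈ s, (a i - b i) ^ 2 + 2 * ∑ i ∈ s, (b i - c i) ^ 2 := by
  rw [mul_sum, mul_sum, ← sum_add_distrib]
  refine sum_le_sum fun i _ => ?_
  have h := add_sq_le (a := a i - b i) (b := b i - c i)
  rw [sub_add_sub_cancel] at h
  linarith

lemma natCast_mul_Dnp_two (Feps : ℝ → ℝ) (n : ℕ) (Y : ℕ → Ω → ℝ) (X : ℕ → Ω → Fin d → ℝ)
    (ω : Ω) (β : Fin d → ℝ) :
    (n : ℝ) * Dnp Feps 2 n Y X ω β =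
      ∑ j ∈ range n,
        (empCDF n Y ω (Y j ω) - (n : ℝ)⁻¹ * ∑ i ∈ range n, Feps (Y j ω - β ⬝ᵥ X i ω)) ^ 2 := by
  rcases eq_or_ne n 0 with rfl | hn
  · simp [Dnp]
  · simp only [Dnp, sq_abs, mul_inv_cancel_left₀ (Nat.cast_ne_zero.2 hn : (n : ℝ) ≠ 0)]

lemma natCast_mul_Dnp_two_le (n : ℕ) (Y : ℕ → Ω → ℝ) (X : ℕ → Ω → Fin d → ℝ)
    (μeps μY : Measure ℝ) (ω : Ω) (β₀ : Fin d → ℝ) :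
    (n : ℝ) * Dnp (cdfOf μeps) 2 n Y X ω β₀ ≤
      2 * (empCDFError n Y μY ω + plugInError n Y X μeps μY β₀ ω) := by
  rw [natCast_mul_Dnp_two, mul_add]
  exact sum_sq_sub_le _ _ (fun j => cdfOf μY (Y j ω)) _

lemma natCast_mul_avg_sq_cdfOf_sub_le (Feps : ℝ → ℝ) (n : ℕ) (Y : ℕ → Ω → ℝ)
    (X : ℕ → Ω → Fin d → ℝ) (μY : Measure ℝ) (ω : Ω) (β : Fin d → ℝ) :
    (n : ℝ) * ((n : ℝ)⁻¹ * ∑ j ∈ range n,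
        (cdfOf μY (Y j ω) - (n : ℝ)⁻¹ * ∑ i ∈ range n, Feps (Y j ω - β ⬝ᵥ X i ω)) ^ 2) ≤
      2 * empCDFError n Y μY ω + 2 * ((n : ℝ) * Dnp Feps 2 n Y X ω β) := by
  have hsymm : ∑ j ∈ range n, (cdfOf μY (Y j ω) - empCDF n Y ω (Y j ω)) ^ 2 =
      empCDFError n Y μY ω :=
    sum_congr rfl fun j _ => sub_sq_comm _ _
  rw [← mul_assoc, natCast_mul_Dnp_two, ← hsymm]
  exact (mul_le_of_le_one_left (sum_nonneg fun _ _ => sq_nonneg _) mul_inv_le_one).trans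
    (sum_sq_sub_le _ _ (fun j => empCDF n Y ω (Y j ω)) _)

end Deviations

section Expectations

variable {Ω : Type*} [MeasureSpace Ω] [IsProbabilityMeasure (ℙ : Measure Ω)] {d : ℕ}
  {μX : Measure (Fin d → ℝ)} {μeps μY : Measure ℝ} {β₀ : Fin d → ℝ}
  {X : ℕ → Ω → Fin d → ℝ} {Y : ℕ → Ω → ℝ}

lemma integrable_empCDFError (hY : IsIIDSample Y μY) (n : ℕ) :
    Integrable (empCDFError n Y μY) ℙ := by
  have := hY.isProbabilityMeasure
  rw [empCDFError_eq]
  exact integrable_sum_sq_kernel_avg (measurable_indicatorKernel μY)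
    (abs_indicatorKernel_le_one μY) hY.1 hY.1 n

lemma integral_empCDFError_le (hY : IsIIDSample Y μY) (n : ℕ) :
    ∫ ω, empCDFError n Y μY ω ∂ℙ ≤ 3 := by
  have := hY.isProbabilityMeasure
  rw [empCDFError_eq]
  exact integral_sum_sq_kernel_avg_le_three (measurable_indicatorKernel μY)
    (abs_indicatorKernel_le_one μY) (integral_indicatorKernel μY) hY.1 hY.1
    (fun _ _ _ hik hij hkj => hY.map_triple_eq_prod hik hij hkj) n

variable [IsProbabilityMeasure μeps]

lemma integrable_plugInError (hX : IsIIDSample X μX) (hY : IsIIDSample Y μY) (n : ℕ) :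
    Integrable (plugInError n Y X μeps μY β₀) ℙ := by
  have := hY.isProbabilityMeasure
  rw [plugInError_eq]
  exact integrable_sum_sq_kernel_avg measurable_convolutionKernel
    abs_convolutionKernel_le_one hX.1 hY.1 n

lemma integral_plugInError_le [IsProbabilityMeasure μX] (hmodel : UnlinkedModel μX μeps β₀ μY)
    (hX : IsIIDSample X μX) (hY : IsIIDSample Y μY)
    (hindep : IndepFun (fun ω => fun i => Y i ω) (fun ω => fun i => X i ω) ℙ) (n : ℕ) :
    ∫ ω, plugInError n Y X μeps μY β₀ ω ∂ℙ ≤ 3 := by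
  have := hY.isProbabilityMeasure
  rw [plugInError_eq]
  exact integral_sum_sq_kernel_avg_le_three measurable_convolutionKernel
    abs_convolutionKernel_le_one hmodel.integral_convolutionKernel hX.1 hY.1
    (fun _ _ j hik _ _ => map_pair_sample_prodMk_eq_prod hX hY hindep hik j) n

end Expectations

section BoundedInProbability

variable {Ω : Type*} [MeasurableSpace Ω] {P : Measure Ω}

/-- `Z n = O_P(1)` as `n → ∞`. -/
def IsBoundedInProbability (P : Measure Ω) (Z : ℕ → Ω → ℝ) : Prop :=
  ∀ ε > (0 : ℝ), ∃ M : ℝ, ∀ n : ℕ, 1 ≤ n → P {ω | M < Z n ω} ≤ ENNReal.ofReal ε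

lemma IsBoundedInProbability.of_integral_le [IsFiniteMeasure P] {Z : ℕ → Ω → ℝ}
    (hZ0 : ∀ n ω, 0 ≤ Z n ω) (hZi : ∀ n, Integrable (Z n) P) {C : ℝ}
    (hC : ∀ n, ∫ ω, Z n ω ∂P ≤ C) : IsBoundedInProbability P Z := by
  intro ε hε
  set K := max C 1
  have hK : 0 < K := lt_max_of_lt_right one_pos
  refine ⟨K / ε, fun n _ => ?_⟩
  have hmarkov := mul_meas_ge_le_integral_of_nonneg (ae_of_all _ (hZ0 n)) (hZi n) (K / ε)
  calc P {ω | K / ε < Z n ω} ≤ P {ω | K / ε ≤ Z n ω} :=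
        measure_mono fun ω (hω : K / ε < Z n ω) => hω.le
    _ ≤ ENNReal.ofReal ε := by
      rw [ENNReal.le_ofReal_iff_toReal_le (measure_ne_top _ _) hε.le, ← measureReal_def]
      have hCK : ∫ ω, Z n ω ∂P ≤ K := (hC n).trans (le_max_left _ _)
      rw [← mul_le_mul_iff_of_pos_left (div_pos hK hε), div_mul_cancel₀ _ hε.ne']
      linarith

lemma IsBoundedInProbability.of_le_mul {Z Z' : ℕ → Ω → ℝ} (hZ : IsBoundedInProbability P Z)
    {c : ℝ} (hc : 0 < c) (hle : ∀ n ω, Z' n ω ≤ c * Z n ω) : IsBoundedInProbability P Z' := by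
  intro ε hε
  obtain ⟨M, hM⟩ := hZ ε hε
  refine ⟨c * M, fun n hn => (measure_mono fun ω (hω : c * M < Z' n ω) => ?_).trans (hM n hn)⟩
  exact lt_of_mul_lt_mul_left (hω.trans_le (hle n ω)) hc.le

end BoundedInProbability

theorem criterion_rate_general
    {Ω : Type*} [MeasureSpace Ω] [IsProbabilityMeasure (ℙ : Measure Ω)]
    {d : ℕ} (μX : Measure (Fin d → ℝ)) (μeps μY : Measure ℝ)
    [IsProbabilityMeasure μX] [IsProbabilityMeasure μeps]
    (β₀ : Fin d → ℝ) (hmodel : UnlinkedModel μX μeps β₀ μY)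
    (X : ℕ → Ω → Fin d → ℝ) (Y : ℕ → Ω → ℝ)
    (hX : IsIIDSample X μX) (hY : IsIIDSample Y μY)
    (hindep : IndepFun (fun ω => fun i => Y i ω) (fun ω => fun i => X i ω) ℙ)
    (βhat : ℕ → Ω → Fin d → ℝ)
    (hmin : ∀ n ω, ∀ β : Fin d → ℝ,
      Dnp (cdfOf μeps) 2 n Y X ω (βhat n ω) ≤ Dnp (cdfOf μeps) 2 n Y X ω β) :
    (∀ ε > (0 : ℝ), ∃ M : ℝ, ∀ n : ℕ, 1 ≤ n →
        ℙ {ω | M < (n : ℝ) * Dnp (cdfOf μeps) 2 n Y X ω (βhat n ω)} ≤ ENNReal.ofReal ε) ∧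
    (∀ ε > (0 : ℝ), ∃ M : ℝ, ∀ n : ℕ, 1 ≤ n →
        ℙ {ω | M < (n : ℝ) * ((n : ℝ)⁻¹ * ∑ j ∈ Finset.range n,
            (cdfOf μY (Y j ω) -
              (n : ℝ)⁻¹ * ∑ i ∈ Finset.range n,
                cdfOf μeps (Y j ω - βhat n ω ⬝ᵥ X i ω)) ^ 2)} ≤ ENNReal.ofReal ε) ∧
    (∀ ε > (0 : ℝ), ∃ M : ℝ, ∀ n : ℕ, 1 ≤ n →
        ℙ {ω | M < (n : ℝ) * Dnp (cdfOf μeps) 2 n Y X ω β₀} ≤ ENNReal.ofReal ε) := by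
  have hR : IsBoundedInProbability ℙ fun n ω =>
      empCDFError n Y μY ω + plugInError n Y X μeps μY β₀ ω :=
    .of_integral_le (C := 6)
      (fun n ω => add_nonneg (empCDFError_nonneg n Y μY ω) (plugInError_nonneg n Y X μeps μY β₀ ω))
      (fun n => (integrable_empCDFError hY n).add (integrable_plugInError hX hY n))
      fun n => by
        rw [integral_add (integrable_empCDFError hY n) (integrable_plugInError hX hY n)]
        linarith [integral_empCDFError_le hY n, integral_plugInError_le hmodel hX hY hindep n]
  have hβhat : ∀ (n : ℕ) ω, (n : ℝ) * Dnp (cdfOf μeps) 2 n Y X ω (βhat n ω) ≤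
      2 * (empCDFError n Y μY ω + plugInError n Y X μeps μY β₀ ω) := fun n ω =>
    (mul_le_mul_of_nonneg_left (hmin n ω β₀) n.cast_nonneg).trans
      (natCast_mul_Dnp_two_le n Y X μeps μY ω β₀)
  refine ⟨hR.of_le_mul two_pos hβhat, hR.of_le_mul (c := 6) (by norm_num) fun n ω => ?_,
    hR.of_le_mul two_pos fun n ω => natCast_mul_Dnp_two_le n Y X μeps μY ω β₀⟩
  linarith [natCast_mul_avg_sq_cdfOf_sub_le (cdfOf μeps) n Y X μY ω (βhat n ω), hβhat n ω,
    empCDFError_nonneg n Y μY ω, plugInError_nonneg n Y X μeps μY β₀ ω]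

/-- **Rate of the minimal criterion.**  For any minimizer `β̂ₙ` of `D_{n,2}`,
`D_{n,2}(β̂ₙ) = O_P(n⁻¹)`; the same bound holds with the true CDF `F^Y` in place of the
empirical CDF inside the square, and `D_{n,2}(β₀) = O_P(n⁻¹)`. -/
theorem criterion_rate
    {Ω : Type*} [MeasureSpace Ω] [IsProbabilityMeasure (ℙ : Measure Ω)]
    {d : ℕ} (μX : Measure (Fin d → ℝ)) (μeps μY : Measure ℝ)
    [IsProbabilityMeasure μX] [IsProbabilityMeasure μeps]
    (β₀ : Fin d → ℝ) (hmodel : UnlinkedModel μX μeps β₀ μY)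
    (feps : ℝ → ℝ) (hfnonneg : ∀ t, 0 ≤ feps t)
    (hdensity : μeps = volume.withDensity fun t => ENNReal.ofReal (feps t))
    (X : ℕ → Ω → Fin d → ℝ) (Y : ℕ → Ω → ℝ)
    (hX : IsIIDSample X μX) (hY : IsIIDSample Y μY)
    (hindep : IndepFun (fun ω => fun i => Y i ω) (fun ω => fun i => X i ω) ℙ)
    (βhat : ℕ → Ω → Fin d → ℝ)
    (hmin : ∀ n ω, ∀ β : Fin d → ℝ,
      Dnp (cdfOf μeps) 2 n Y X ω (βhat n ω) ≤ Dnp (cdfOf μeps) 2 n Y X ω β) :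
    (∀ ε > (0 : ℝ), ∃ M : ℝ, ∀ n : ℕ, 1 ≤ n →
        ℙ {ω | M < (n : ℝ) * Dnp (cdfOf μeps) 2 n Y X ω (βhat n ω)} ≤ ENNReal.ofReal ε) ∧
    (∀ ε > (0 : ℝ), ∃ M : ℝ, ∀ n : ℕ, 1 ≤ n →
        ℙ {ω | M < (n : ℝ) * ((n : ℝ)⁻¹ * ∑ j ∈ Finset.range n,
            (cdfOf μY (Y j ω) -
              (n : ℝ)⁻¹ * ∑ i ∈ Finset.range n,
                cdfOf μeps (Y j ω - βhat n ω ⬝ᵥ X i ω)) ^ 2)} ≤ ENNReal.ofReal ε) ∧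
    (∀ ε > (0 : ℝ), ∃ M : ℝ, ∀ n : ℕ, 1 ≤ n →
        ℙ {ω | M < (n : ℝ) * Dnp (cdfOf μeps) 2 n Y X ω β₀} ≤ ENNReal.ofReal ε) :=
  criterion_rate_general μX μeps μY β₀ hmodel X Y hX hY hindep βhat hmin
end
end

section
/- Let M > 0 and let f : R → [0, M] be such that there exist real numbers a < b with f non-decreasing on (−∞, a], monotone on (a, b), and non-increasing on [b, ∞). Let X_1,…,X_n be i.i.d. copies of a random vector X in R^d with E‖X‖²_2 < ∞, and let F^X_n denote their empirical distribution. Then sup_{(β,z) ∈ R^d × R} ‖∫ x f(β^T x + z) dF^X_n(x)‖_2 = O_P(1). -/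
/-
Since `0 ≤ f ≤ M`, the triangle inequality bounds the vector `∫ x f(βᵀx + z) dFₙˣ(x)`, uniformly in
`(β, z)`, by `M` times the empirical mean of `‖Xₖ‖₂`. That mean has expectation `E‖X‖₂ < ∞` for
every `n`, so Markov's inequality makes it `O_P(1)`.
-/

open MeasureTheory ProbabilityTheory Filter Matrix
open scoped ENNReal NNReal Topology

noncomputable section

lemma vnorm_eq_norm {d : ℕ} (v : Fin d → ℝ) : vnorm v = ‖WithLp.toLp 2 v‖ := by
  simp [vnorm, EuclideanSpace.norm_eq, Real.norm_eq_abs, sq_abs]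

lemma vnorm_nonneg {d : ℕ} (v : Fin d → ℝ) : 0 ≤ vnorm v := Real.sqrt_nonneg _

lemma measurable_vnorm {d : ℕ} : Measurable (vnorm (d := d)) := by
  simp only [funext vnorm_eq_norm]
  exact (continuous_norm.comp (PiLp.continuous_toLp 2 _)).measurable

lemma vnorm_le_one_add_sum_sq {d : ℕ} (v : Fin d → ℝ) : vnorm v ≤ 1 + ∑ i, v i ^ 2 := by
  have hs : 0 ≤ ∑ i, v i ^ 2 := Finset.sum_nonneg fun i _ => sq_nonneg _
  unfold vnorm
  nlinarith [Real.sq_sqrt hs, sq_nonneg (Real.sqrt (∑ i, v i ^ 2) - 1)]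

lemma integrable_vnorm {d : ℕ} {μ : Measure (Fin d → ℝ)} [IsFiniteMeasure μ]
    (h : Integrable (fun x : Fin d → ℝ => ∑ i, x i ^ 2) μ) : Integrable vnorm μ := by
  refine ((integrable_const 1).add h).mono' measurable_vnorm.aestronglyMeasurable
    (ae_of_all _ fun x => ?_)
  rw [Real.norm_of_nonneg (vnorm_nonneg x)]
  exact vnorm_le_one_add_sum_sq x

lemma vnorm_mean_mul_le {d n : ℕ} (w : ℕ → Fin d → ℝ) (c : ℕ → ℝ) {M : ℝ}
    (hc : ∀ k, |c k| ≤ M) :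
    vnorm (fun i => (n : ℝ)⁻¹ * ∑ k ∈ Finset.range n, w k i * c k)
      ≤ (n : ℝ)⁻¹ * ∑ k ∈ Finset.range n, M * vnorm (w k) := by
  have hvec : WithLp.toLp 2 (fun i => (n : ℝ)⁻¹ * ∑ k ∈ Finset.range n, w k i * c k)
      = (n : ℝ)⁻¹ • ∑ k ∈ Finset.range n, c k • WithLp.toLp 2 (w k) := by
    ext i
    simp [Finset.sum_apply, mul_comm]
  rw [vnorm_eq_norm, hvec, norm_smul, Real.norm_of_nonneg (by positivity)]
  gcongr
  refine (norm_sum_le _ _).trans (Finset.sum_le_sum fun k _ => ?_)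
  rw [norm_smul, Real.norm_eq_abs, vnorm_eq_norm]
  gcongr
  exact hc k

lemma lintegral_empirical_mean_le {Ω E : Type*} [MeasurableSpace Ω] [MeasurableSpace E]
    {μ : Measure Ω} {ν : Measure E} {Z : ℕ → Ω → E}
    (hZ : ∀ k, Measurable (Z k)) (hmap : ∀ k, μ.map (Z k) = ν) {g : E → ℝ}
    (hg : Measurable g) (hg0 : ∀ x, 0 ≤ g x) (n : ℕ) :
    ∫⁻ ω, ENNReal.ofReal ((n : ℝ)⁻¹ * ∑ k ∈ Finset.range n, g (Z k ω)) ∂μ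
      ≤ ∫⁻ x, ENNReal.ofReal (g x) ∂ν := by
  have hterm : ∀ k, Measurable fun ω => ENNReal.ofReal (g (Z k ω)) :=
    fun k => (hg.comp (hZ k)).ennreal_ofReal
  have hsplit : ∀ ω, ENNReal.ofReal ((n : ℝ)⁻¹ * ∑ k ∈ Finset.range n, g (Z k ω))
      = ENNReal.ofReal (n : ℝ)⁻¹ * ∑ k ∈ Finset.range n, ENNReal.ofReal (g (Z k ω)) := by
    intro ω
    rw [ENNReal.ofReal_mul (by positivity), ENNReal.ofReal_sum_of_nonneg fun k _ => hg0 _]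
  have hlaw : ∀ k, ∫⁻ ω, ENNReal.ofReal (g (Z k ω)) ∂μ = ∫⁻ x, ENNReal.ofReal (g x) ∂ν := by
    intro k
    rw [← hmap k, lintegral_map hg.ennreal_ofReal (hZ k)]
  have hscale : ENNReal.ofReal (n : ℝ)⁻¹ * n ≤ 1 := by
    rw [← ENNReal.ofReal_natCast, ← ENNReal.ofReal_mul (by positivity), ← ENNReal.ofReal_one]
    gcongr
    rcases n.eq_zero_or_pos with rfl | hn
    · simp
    · rw [inv_mul_cancel₀ (by positivity)]
  simp only [hsplit]
  rw [lintegral_const_mul _ (Finset.measurable_sum _ fun k _ => hterm k),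
    lintegral_finsetSum _ fun k _ => hterm k, Finset.sum_congr rfl fun k _ => hlaw k,
    Finset.sum_const, Finset.card_range, nsmul_eq_mul, ← mul_assoc]
  exact mul_le_of_le_one_left zero_le hscale

lemma exists_measure_lt_le_of_lintegral_le {Ω ι : Type*} [MeasurableSpace Ω] {μ : Measure Ω} {Y : ι → Ω → ℝ}
    (hY : ∀ i, AEMeasurable (Y i) μ) {C : ℝ≥0∞} (hC : C ≠ ∞)
    (hYC : ∀ i, ∫⁻ ω, ENNReal.ofReal (Y i ω) ∂μ ≤ C) :
    ∀ ε > (0 : ℝ), ∃ K : ℝ, ∀ i, μ {ω | K < Y i ω} ≤ ENNReal.ofReal ε := by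
  intro ε hε
  refine ⟨C.toReal / ε + 1, fun i => ?_⟩
  set K := C.toReal / ε + 1
  have hK : 0 < K := by positivity
  have hCK : C ≤ ENNReal.ofReal ε * ENNReal.ofReal K := by
    rw [← ENNReal.ofReal_mul hε.le, show ε * K = C.toReal + ε by simp only [K]; field_simp]
    calc C = ENNReal.ofReal C.toReal := (ENNReal.ofReal_toReal hC).symm
      _ ≤ ENNReal.ofReal (C.toReal + ε) := ENNReal.ofReal_le_ofReal (by linarith)
  calc μ {ω | K < Y i ω}
      ≤ μ {ω | ENNReal.ofReal K ≤ ENNReal.ofReal (Y i ω)} :=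
        measure_mono fun ω hω => ENNReal.ofReal_le_ofReal (le_of_lt hω)
    _ ≤ (∫⁻ ω, ENNReal.ofReal (Y i ω) ∂μ) / ENNReal.ofReal K :=
        meas_ge_le_lintegral_div (hY i).ennreal_ofReal (by simp [hK]) ENNReal.ofReal_ne_top
    _ ≤ C / ENNReal.ofReal K := by gcongr; exact hYC i
    _ ≤ ENNReal.ofReal ε := ENNReal.div_le_of_le_mul hCK

theorem piecewise_monotone_uniform_bound_general
    {Ω : Type*} [MeasureSpace Ω]
    {d : ℕ} (μX : Measure (Fin d → ℝ)) [IsProbabilityMeasure μX]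
    (f : ℝ → ℝ) (M : ℝ)
    (hf0 : ∀ t, 0 ≤ f t) (hfM : ∀ t, f t ≤ M)
    (X : ℕ → Ω → Fin d → ℝ) (hX : IsIIDSample X μX)
    (hX2 : Integrable (fun x : Fin d → ℝ => ∑ i, x i ^ 2) μX) :
    ∀ ε > (0 : ℝ), ∃ K : ℝ, ∀ n : ℕ, 1 ≤ n →
      ℙ {ω | ∃ β : Fin d → ℝ, ∃ z : ℝ,
          K < vnorm (fun i => (n : ℝ)⁻¹ * ∑ k ∈ Finset.range n,
            X k ω i * f (β ⬝ᵥ X k ω + z))} ≤ ENNReal.ofReal ε := by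
  obtain ⟨hXm, hXlaw, -⟩ := hX
  have hM : 0 ≤ M := (hf0 0).trans (hfM 0)
  have hg : Measurable fun x : Fin d → ℝ => M * vnorm x := measurable_vnorm.const_mul M
  have hg0 : ∀ x : Fin d → ℝ, 0 ≤ M * vnorm x := fun x => mul_nonneg hM (vnorm_nonneg x)
  have hmean := exists_measure_lt_le_of_lintegral_le
    (Y := fun (n : ℕ) ω => (n : ℝ)⁻¹ * ∑ k ∈ Finset.range n, M * vnorm (X k ω))
    (fun n => (measurable_const.mul (Finset.measurable_sum _ fun k _ =>
      hg.comp (hXm k))).aemeasurable)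
    ((integrable_vnorm hX2).const_mul M).lintegral_lt_top.ne
    (lintegral_empirical_mean_le hXm hXlaw hg hg0)
  intro ε hε
  obtain ⟨K, hK⟩ := hmean ε hε
  refine ⟨K, fun n _ => (measure_mono fun ω hω => ?_).trans (hK n)⟩
  obtain ⟨β, z, hω⟩ := hω
  exact hω.trans_le <| vnorm_mean_mul_le (fun k => X k ω) _ fun k => by
    rw [abs_of_nonneg (hf0 _)]; exact hfM _

/-- **Uniform stochastic boundedness of empirical vector integrals of a
piecewise monotone bounded function.**  If `0 ≤ f ≤ M` is nondecreasing on `(-∞, a]`,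
monotone on `(a, b)` and nonincreasing on `[b, ∞)`, and `E‖X‖² < ∞`, then
`sup_{β,z} ‖∫ x f(βᵀx + z) dFₙˣ(x)‖₂ = O_P(1)`. -/
theorem piecewise_monotone_uniform_bound
    {Ω : Type*} [MeasureSpace Ω] [IsProbabilityMeasure (ℙ : Measure Ω)]
    {d : ℕ} (μX : Measure (Fin d → ℝ)) [IsProbabilityMeasure μX]
    (f : ℝ → ℝ) (M : ℝ) (hM : 0 < M)
    (hf0 : ∀ t, 0 ≤ f t) (hfM : ∀ t, f t ≤ M)
    (a b : ℝ) (hab : a < b)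
    (h1 : MonotoneOn f (Set.Iic a))
    (h2 : MonotoneOn f (Set.Ioo a b) ∨ AntitoneOn f (Set.Ioo a b))
    (h3 : AntitoneOn f (Set.Ici b))
    (X : ℕ → Ω → Fin d → ℝ) (hX : IsIIDSample X μX)
    (hX2 : Integrable (fun x : Fin d → ℝ => ∑ i, x i ^ 2) μX) :
    ∀ ε > (0 : ℝ), ∃ K : ℝ, ∀ n : ℕ, 1 ≤ n →
      ℙ {ω | ∃ β : Fin d → ℝ, ∃ z : ℝ,
          K < vnorm (fun i => (n : ℝ)⁻¹ * ∑ k ∈ Finset.range n,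
            X k ω i * f (β ⬝ᵥ X k ω + z))} ≤ ENNReal.ofReal ε :=
  piecewise_monotone_uniform_bound_general μX f M hf0 hfM X hX hX2
end
end
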